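/- arXiv:2507.11249 — 2 statements merged into one kernel-verified Lean document; each statement's English description precedes it below -/
import Mathlib

section
/- Let M ≥ 1, N ≥ 1, 1 ≤ R ≤ min(M, N), σ_e² > 0, λ_1, …, λ_R > 0, and ỹ ∈ ℝ^M. Then the lifted maximum-likelihood objective F(w, z) = Σ_{j=1}^R (1/2)(ỹ_j² z + λ_j² w_j − 2|ỹ_j| λ_j √(w_j z)) + (1/2)(Σ_{m=R+1}^M ỹ_m²) z − (M/2) log z is convex on the set {(w, z) ∈ ℝ^N × ℝ : w_j ≥ 0 for all j, z > 0}. -/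
lemma sqrt_combo (w1 z1 w2 z2 a b : ℝ) (hw1 : 0 ≤ w1) (hz1 : 0 ≤ z1)
    (hw2 : 0 ≤ w2) (hz2 : 0 ≤ z2) (ha : 0 ≤ a) (hb : 0 ≤ b) :
    a * Real.sqrt (w1 * z1) + b * Real.sqrt (w2 * z2)
      ≤ Real.sqrt ((a * w1 + b * w2) * (a * z1 + b * z2)) := by
  have s1 := Real.sq_sqrt (mul_nonneg hw1 hz1)
  have s2 := Real.sq_sqrt (mul_nonneg hw2 hz2)
  have hst : Real.sqrt (w1*z1) * Real.sqrt (w2*z2)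
      = Real.sqrt (w1*z2) * Real.sqrt (w2*z1) := by
    rw [← Real.sqrt_mul (mul_nonneg hw1 hz1), ← Real.sqrt_mul (mul_nonneg hw1 hz2)]
    ring_nf
  have key : 2 * (Real.sqrt (w1*z2) * Real.sqrt (w2*z1)) ≤ w1*z2 + w2*z1 := by
    nlinarith [sq_nonneg (Real.sqrt (w1*z2) - Real.sqrt (w2*z1)),
      Real.sq_sqrt (mul_nonneg hw1 hz2), Real.sq_sqrt (mul_nonneg hw2 hz1)]
  have key2 := mul_le_mul_of_nonneg_left key (mul_nonneg ha hb)
  have expand : (a * Real.sqrt (w1*z1) + b * Real.sqrt (w2*z2)) ^ 2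
      = a^2 * (w1*z1) + a*b*(2*(Real.sqrt (w1*z2) * Real.sqrt (w2*z1))) + b^2*(w2*z2) := by
    linear_combination a^2 * s1 + b^2 * s2 + 2*a*b*hst
  rw [Real.le_sqrt (by positivity)
    (mul_nonneg (by positivity) (by positivity)), expand]
  nlinarith [key2]

/-- The lifted maximum-likelihood objective
`F(w, z) = ∑_{j=1}^R (1/2)(ỹ_j² z + λ_j² w_j − 2|ỹ_j| λ_j √(w_j z))
          + (1/2)(∑_{m=R+1}^M ỹ_m²) z − (M/2) log z`
is convex on `{(w, z) ∈ ℝ^N × ℝ : w_j ≥ 0 for all j, z > 0}`. -/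
theorem stmt_2 (M N R : ℕ) (hM : 1 ≤ M) (hN : 1 ≤ N) (hR : 1 ≤ R)
    (hRM : R ≤ M) (hRN : R ≤ N)
    (se : ℝ) (hse : 0 < se)
    (lam : Fin R → ℝ) (hlam : ∀ j, 0 < lam j)
    (y : Fin M → ℝ) :
    ConvexOn ℝ {p : (Fin N → ℝ) × ℝ | (∀ j, 0 ≤ p.1 j) ∧ 0 < p.2}
      (fun p => (∑ j : Fin R, (1/2) * ((y (Fin.castLE hRM j)) ^ 2 * p.2
            + (lam j) ^ 2 * p.1 (Fin.castLE hRN j)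
            - 2 * |y (Fin.castLE hRM j)| * lam j
              * Real.sqrt (p.1 (Fin.castLE hRN j) * p.2)))
        + (1/2) * (∑ m ∈ Finset.univ.filter (fun m : Fin M => R ≤ (m : ℕ)), (y m) ^ 2) * p.2
        - ((M : ℝ)/2) * Real.log p.2) := by
  constructor
  · intro p hp q hq a b ha hb hab
    refine ⟨fun j => ?_, ?_⟩
    · have : (a • p + b • q).1 j = a * p.1 j + b * q.1 j := by
        simp [Prod.fst_add, smul_eq_mul]
      rw [this]
      exact add_nonneg (mul_nonneg ha (hp.1 j)) (mul_nonneg hb (hq.1 j))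
    · have : (a • p + b • q).2 = a * p.2 + b * q.2 := by
        simp [Prod.snd_add, smul_eq_mul]
      rw [this]
      rcases eq_or_lt_of_le ha with h | h
      · have hb1 : b = 1 := by linarith
        simp [← h, hb1, hq.2]
      · exact add_pos_of_pos_of_nonneg (mul_pos h hp.2)
          (mul_nonneg hb hq.2.le)
  · intro p hp q hq a b ha hb hab
    simp only [Prod.fst_add, Prod.snd_add, Prod.smul_fst, Prod.smul_snd,
      Pi.add_apply, Pi.smul_apply, smul_eq_mul]
    -- log inequality
    have hlog : a * Real.log p.2 + b * Real.log q.2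
        ≤ Real.log (a * p.2 + b * q.2) := by
      have := strictConcaveOn_log_Ioi.concaveOn.2 (Set.mem_Ioi.2 hp.2)
        (Set.mem_Ioi.2 hq.2) ha hb hab
      simpa [smul_eq_mul] using this
    have hlog2 := mul_le_mul_of_nonneg_left hlog
      (by positivity : (0:ℝ) ≤ (M : ℝ)/2)
    -- sum inequality
    have hsum : ∑ j : Fin R, (1/2) * ((y (Fin.castLE hRM j)) ^ 2 * (a * p.2 + b * q.2)
            + (lam j) ^ 2 * (a * p.1 (Fin.castLE hRN j) + b * q.1 (Fin.castLE hRN j))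
            - 2 * |y (Fin.castLE hRM j)| * lam j
              * Real.sqrt ((a * p.1 (Fin.castLE hRN j) + b * q.1 (Fin.castLE hRN j))
                  * (a * p.2 + b * q.2)))
        ≤ ∑ j : Fin R, (a * ((1/2) * ((y (Fin.castLE hRM j)) ^ 2 * p.2
            + (lam j) ^ 2 * p.1 (Fin.castLE hRN j)
            - 2 * |y (Fin.castLE hRM j)| * lam j
              * Real.sqrt (p.1 (Fin.castLE hRN j) * p.2)))
          + b * ((1/2) * ((y (Fin.castLE hRM j)) ^ 2 * q.2
            + (lam j) ^ 2 * q.1 (Fin.castLE hRN j)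
            - 2 * |y (Fin.castLE hRM j)| * lam j
              * Real.sqrt (q.1 (Fin.castLE hRN j) * q.2)))) := by
      refine Finset.sum_le_sum fun j _ => ?_
      have hkey := sqrt_combo (p.1 (Fin.castLE hRN j)) p.2 (q.1 (Fin.castLE hRN j)) q.2
        a b (hp.1 _) hp.2.le (hq.1 _) hq.2.le ha hb
      have hc : (0:ℝ) ≤ |y (Fin.castLE hRM j)| * lam j :=
        mul_nonneg (abs_nonneg _) (hlam j).le
      nlinarith [mul_le_mul_of_nonneg_left hkey hc]
    rw [Finset.sum_add_distrib] at hsum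
    simp only [← Finset.mul_sum] at hsum
    simp only [← Finset.mul_sum]
    linarith [hsum, hlog2]
end

section
/- Let M ≥ 1, 1 ≤ R ≤ M, σ_e² > 0, σ_ε² > 0, λ_1 ≥ … ≥ λ_R > 0 and ỹ ∈ ℝ^M. The function g(ν) = Σ_{j=1}^R ỹ_j² ν σ_e²/(λ_j² + 2νσ_e²) + (1/2) Σ_{m=R+1}^M ỹ_m² − (M/2)(Σ_{j=1}^R σ_e² ỹ_j² λ_j²/(λ_j² + 2νσ_e²)² + σ_ε²) + ν σ_ε² has derivative g'(ν) = Σ_{j=1}^R ỹ_j² λ_j² σ_e²/(λ_j² + 2νσ_e²)² + 2M Σ_{j=1}^R σ_e⁴ ỹ_j² λ_j²/(λ_j² + 2νσ_e²)³ + σ_ε², and g'(ν) > 0 for every ν > −λ_R²/(2σ_e²); consequently g is strictly increasing on the interval (−λ_R²/(2σ_e²), ∞). -/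
/-- The scalar dual function
`g(ν) = ∑_{j=1}^R ỹ_j² ν σ_e²/(λ_j² + 2νσ_e²) + (1/2) ∑_{m=R+1}^M ỹ_m²
        − (M/2)(∑_{j=1}^R σ_e² ỹ_j² λ_j²/(λ_j² + 2νσ_e²)² + σ_ε²) + ν σ_ε²`. -/
noncomputable def gFun (M R : ℕ) (hRM : R ≤ M) (se seps : ℝ)
    (lam : Fin R → ℝ) (y : Fin M → ℝ) (ν : ℝ) : ℝ :=
  (∑ j : Fin R, (y (Fin.castLE hRM j)) ^ 2 * ν * se / ((lam j) ^ 2 + 2 * ν * se))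
    + (1/2) * (∑ m ∈ Finset.univ.filter (fun m : Fin M => R ≤ (m : ℕ)), (y m) ^ 2)
    - ((M : ℝ)/2) * ((∑ j : Fin R, se * (y (Fin.castLE hRM j)) ^ 2 * (lam j) ^ 2
        / ((lam j) ^ 2 + 2 * ν * se) ^ 2) + seps)
    + ν * seps

/-- The claimed derivative of `gFun`:
`g'(ν) = ∑_{j=1}^R ỹ_j² λ_j² σ_e²/(λ_j² + 2νσ_e²)²
        + 2M ∑_{j=1}^R σ_e⁴ ỹ_j² λ_j²/(λ_j² + 2νσ_e²)³ + σ_ε²`. -/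
noncomputable def gFun' (M R : ℕ) (hRM : R ≤ M) (se seps : ℝ)
    (lam : Fin R → ℝ) (y : Fin M → ℝ) (ν : ℝ) : ℝ :=
  (∑ j : Fin R, (y (Fin.castLE hRM j)) ^ 2 * (lam j) ^ 2 * se
      / ((lam j) ^ 2 + 2 * ν * se) ^ 2)
    + 2 * (M : ℝ) * (∑ j : Fin R, se ^ 2 * (y (Fin.castLE hRM j)) ^ 2 * (lam j) ^ 2
      / ((lam j) ^ 2 + 2 * ν * se) ^ 3)
    + seps

/-! The derivative is computed termwise: every summand of `g` is a rational function of `ν`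
whose only pole is at `ν = -λ_j²/(2σ_e²)`. The ordering of the `λ_j` puts all these poles at or
below `-λ_R²/(2σ_e²)`, so on the interval every denominator is positive and every summand of `g'`
is nonnegative, while `σ_ε² > 0` makes the sum strictly positive. Strict monotonicity then follows
from the mean value theorem. -/

section AffineDenominator

variable (a c s ν : ℝ)

theorem hasDerivAt_mul_div_affine (h : a + 2 * ν * s ≠ 0) :
    HasDerivAt (fun t : ℝ => c * t * s / (a + 2 * t * s))
      (c * a * s / (a + 2 * ν * s) ^ 2) ν := by
  have hnum : HasDerivAt (fun t : ℝ => c * t * s) (c * 1 * s) ν :=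
    ((hasDerivAt_id ν).const_mul c).mul_const s
  have hden : HasDerivAt (fun t : ℝ => a + 2 * t * s) (2 * 1 * s) ν :=
    (((hasDerivAt_id ν).const_mul 2).mul_const s).const_add a
  refine (hnum.fun_div hden h).congr_deriv ?_
  field_simp
  ring

theorem hasDerivAt_mul_div_affine_sq (h : a + 2 * ν * s ≠ 0) :
    HasDerivAt (fun t : ℝ => s * c * a / (a + 2 * t * s) ^ 2)
      (-4 * (s ^ 2 * c * a / (a + 2 * ν * s) ^ 3)) ν := by
  have hden : HasDerivAt (fun t : ℝ => a + 2 * t * s) (2 * 1 * s) ν :=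
    (((hasDerivAt_id ν).const_mul 2).mul_const s).const_add a
  refine ((hasDerivAt_const ν (s * c * a)).fun_div (hden.fun_pow 2)
    (pow_ne_zero 2 h)).congr_deriv ?_
  field_simp
  ring

end AffineDenominator

theorem hasDerivAt_gFun (M R : ℕ) (hRM : R ≤ M) (se seps : ℝ) (lam : Fin R → ℝ)
    (y : Fin M → ℝ) (ν : ℝ) (hden : ∀ j, lam j ^ 2 + 2 * ν * se ≠ 0) :
    HasDerivAt (gFun M R hRM se seps lam y) (gFun' M R hRM se seps lam y ν) ν := by
  have hfirst := HasDerivAt.fun_sum (u := Finset.univ) fun j _ =>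
    hasDerivAt_mul_div_affine (lam j ^ 2) (y (Fin.castLE hRM j) ^ 2) se ν (hden j)
  have hsecond := HasDerivAt.fun_sum (u := Finset.univ) fun j _ =>
    hasDerivAt_mul_div_affine_sq (lam j ^ 2) (y (Fin.castLE hRM j) ^ 2) se ν (hden j)
  rw [← Finset.mul_sum] at hsecond
  refine (((hfirst.add_const _).sub ((hsecond.add_const seps).const_mul ((M : ℝ) / 2))).add
    ((hasDerivAt_id ν).mul_const seps)).congr_deriv ?_
  unfold gFun'
  ring

theorem gFun'_pos (M R : ℕ) (hRM : R ≤ M) (se seps : ℝ) (hse : 0 ≤ se) (hseps : 0 < seps)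
    (lam : Fin R → ℝ) (y : Fin M → ℝ) (ν : ℝ) (hden : ∀ j, 0 < lam j ^ 2 + 2 * ν * se) :
    0 < gFun' M R hRM se seps lam y ν := by
  have hfirst : 0 ≤ ∑ j : Fin R, y (Fin.castLE hRM j) ^ 2 * lam j ^ 2 * se
      / (lam j ^ 2 + 2 * ν * se) ^ 2 :=
    Finset.sum_nonneg fun j _ => div_nonneg (by positivity) (pow_nonneg (hden j).le 2)
  have hsecond : 0 ≤ ∑ j : Fin R, se ^ 2 * y (Fin.castLE hRM j) ^ 2 * lam j ^ 2
      / (lam j ^ 2 + 2 * ν * se) ^ 3 :=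
    Finset.sum_nonneg fun j _ => div_nonneg (by positivity) (pow_nonneg (hden j).le 3)
  rw [gFun']
  positivity

theorem add_two_mul_mul_pos_of_neg_div_lt {a b s ν : ℝ} (hs : 0 < s) (hba : b ≤ a)
    (hν : -b / (2 * s) < ν) : 0 < a + 2 * ν * s := by
  rw [div_lt_iff₀ (by positivity)] at hν
  linarith

theorem lam_sq_add_pos_of_mem_Ioi (R : ℕ) (hR : 1 ≤ R) (se : ℝ) (hse : 0 < se)
    (lam : Fin R → ℝ) (hlam : ∀ j, 0 < lam j) (hord : ∀ i j : Fin R, i ≤ j → lam j ≤ lam i)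
    {ν : ℝ} (hν : ν ∈ Set.Ioi (-(lam ⟨R - 1, by omega⟩) ^ 2 / (2 * se))) (j : Fin R) :
    0 < lam j ^ 2 + 2 * ν * se := by
  have hlast : lam ⟨R - 1, by omega⟩ ≤ lam j := hord j _ (Fin.mk_le_mk.mpr (by omega))
  exact add_two_mul_mul_pos_of_neg_div_lt hse (pow_le_pow_left₀ (hlam _).le hlast 2) hν

theorem strictMonoOn_Ioi_of_hasDerivAt_pos {f f' : ℝ → ℝ} {a : ℝ}
    (hf : ∀ x ∈ Set.Ioi a, HasDerivAt f (f' x) x) (hf' : ∀ x ∈ Set.Ioi a, 0 < f' x) :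
    StrictMonoOn f (Set.Ioi a) := by
  refine strictMonoOn_of_hasDerivWithinAt_pos (f' := f') (convex_Ioi a)
    (fun x hx => (hf x hx).continuousAt.continuousWithinAt) ?_ ?_ <;> rw [interior_Ioi]
  · exact fun x hx => (hf x hx).hasDerivWithinAt
  · exact hf'

/-- **(Part of Proposition 2.)** On the interval `(−λ_R²/(2σ_e²), ∞)` the function `g`
has derivative `g'`, the derivative is positive, and consequently `g` is strictly
increasing there. -/
theorem stmt_3 (M R : ℕ) (hR : 1 ≤ R) (hRM : R ≤ M)
    (se seps : ℝ) (hse : 0 < se) (hseps : 0 < seps)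
    (lam : Fin R → ℝ) (hlam : ∀ j, 0 < lam j)
    (hord : ∀ i j : Fin R, i ≤ j → lam j ≤ lam i)
    (y : Fin M → ℝ) :
    (∀ ν ∈ Set.Ioi (-(lam ⟨R - 1, by omega⟩) ^ 2 / (2 * se)),
        HasDerivAt (gFun M R hRM se seps lam y) (gFun' M R hRM se seps lam y ν) ν) ∧
    (∀ ν ∈ Set.Ioi (-(lam ⟨R - 1, by omega⟩) ^ 2 / (2 * se)),
        0 < gFun' M R hRM se seps lam y ν) ∧
    StrictMonoOn (gFun M R hRM se seps lam y)
      (Set.Ioi (-(lam ⟨R - 1, by omega⟩) ^ 2 / (2 * se))) := by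
  have hden := fun ν (hν : ν ∈ Set.Ioi _) =>
    lam_sq_add_pos_of_mem_Ioi R hR se hse lam hlam hord hν
  have hderiv := fun ν hν =>
    hasDerivAt_gFun M R hRM se seps lam y ν fun j => (hden ν hν j).ne'
  have hpos := fun ν hν => gFun'_pos M R hRM se seps hse.le hseps lam y ν (hden ν hν)
  exact ⟨hderiv, hpos, strictMonoOn_Ioi_of_hasDerivAt_pos hderiv hpos⟩
end
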